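/- arXiv:1606.01359 — 3 statements merged into one kernel-verified Lean document; each statement's English description precedes it below -/
import Mathlib

section
/- Let X and Y be nontrivial real Banach spaces, let H be a closed linear subspace of L(X,Y) containing all finite rank operators, and let δ > 0. If the dual space X* is alternatively octahedral and Y is δ-average rough, then H (with the induced operator norm) is δ-average rough. -/
open scoped BigOperators

/-- A Banach space `Z` is `δ`-average rough. -/
def IsAverageRough (Z : Type*) [NormedAddCommGroup Z] (δ : ℝ) : Prop :=
  ∀ n : ℕ, 0 < n → ∀ x : Fin n → Z, (∀ i, ‖x i‖ = 1) →
    ∀ ε > (0 : ℝ), ∀ η > (0 : ℝ), ∃ y : Z, 0 < ‖y‖ ∧ ‖y‖ < η ∧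
      (δ - ε) * ‖y‖ ≤ (1 / (n : ℝ)) * ∑ i, (‖x i + y‖ + ‖x i - y‖) - 2

/-- A Banach space `Z` is `δ`-rough. -/
def IsRough (Z : Type*) [NormedAddCommGroup Z] (δ : ℝ) : Prop :=
  ∀ x : Z, ‖x‖ = 1 →
    ∀ ε > (0 : ℝ), ∀ η > (0 : ℝ), ∃ y : Z, 0 < ‖y‖ ∧ ‖y‖ < η ∧
      (δ - ε) * ‖y‖ ≤ ‖x + y‖ + ‖x - y‖ - 2

/-- A Banach space `Z` is non-rough if it is `ε`-rough for no `ε > 0`. -/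
def NonRough (Z : Type*) [NormedAddCommGroup Z] : Prop :=
  ¬ ∃ ε > (0 : ℝ), IsRough Z ε

/-- A Banach space `Z` is octahedral. -/
def Octahedral (Z : Type*) [NormedAddCommGroup Z] : Prop :=
  ∀ (n : ℕ) (x : Fin n → Z), (∀ i, ‖x i‖ = 1) →
    ∀ ε > (0 : ℝ), ∃ y : Z, ‖y‖ = 1 ∧ ∀ i, 2 - ε ≤ ‖x i + y‖

/-- A Banach space `Z` is alternatively octahedral. -/
def AlternativelyOctahedral (Z : Type*) [NormedAddCommGroup Z] : Prop :=
  ∀ (n : ℕ) (x : Fin n → Z), (∀ i, ‖x i‖ = 1) →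
    ∀ ε > (0 : ℝ), ∃ y : Z, ‖y‖ = 1 ∧ ∀ i, 2 - ε ≤ max ‖x i + y‖ ‖x i - y‖

/-- A Banach space `X` is weakly `δ`-average rough: every non-empty relatively weak*
open subset of the closed unit ball of the dual has diameter at least `δ`. -/
def WeaklyAverageRough (X : Type*) [NormedAddCommGroup X] [NormedSpace ℝ X] (δ : ℝ) : Prop :=
  ∀ V : Set (WeakDual ℝ X), IsOpen V →
    ∀ U : Set (StrongDual ℝ X),
      U = {f : StrongDual ℝ X | ‖f‖ ≤ 1} ∩
            {f : StrongDual ℝ X | StrongDual.toWeakDual f ∈ V} →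
      U.Nonempty → δ ≤ Metric.diam U

/-!
Fix unit operators `T₁, …, Tₙ` in `H` and norming functionals `gᵢ` of the `Tᵢ`. Alternative
octahedrality of `X*` gives a unit `f` with `‖gᵢ + f‖` or `‖gᵢ - f‖` close to `2`, hence points
`zᵢ` of the unit ball where `Tᵢ` nearly attains its norm and `|f zᵢ|` is nearly `1`. Average
roughness of `Y` at the unit vectors `Tᵢ zᵢ / ‖Tᵢ zᵢ‖` gives a small `y`, and the rank-one
operator `f ⊗ y`, which lies in `H`, witnesses average roughness of `H` because
`‖Tᵢ ± f ⊗ y‖ ≥ ‖Tᵢ zᵢ ± f(zᵢ) y‖`.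
-/

section NormInequalities

variable {E : Type*} [NormedAddCommGroup E]

theorem norm_add_add_norm_sub_le (a b y y' : E) :
    ‖a + y‖ + ‖a - y‖ ≤ ‖b + y'‖ + ‖b - y'‖ + 2 * ‖a - b‖ + 2 * ‖y - y'‖ := by
  have hplus : ‖a + y‖ ≤ ‖b + y'‖ + ‖a - b‖ + ‖y - y'‖ := by
    calc ‖a + y‖ = ‖(b + y') + (a - b) + (y - y')‖ := by congr 1; abel
      _ ≤ _ := norm_add₃_le
  have hminus : ‖a - y‖ ≤ ‖b - y'‖ + ‖a - b‖ + ‖y - y'‖ := by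
    calc ‖a - y‖ = ‖(b - y') + (a - b) - (y - y')‖ := by congr 1; abel
      _ ≤ ‖(b - y') + (a - b)‖ + ‖y - y'‖ := norm_sub_le _ _
      _ ≤ _ := by gcongr; exact norm_add_le _ _
  linarith

variable [NormedSpace ℝ E]

theorem norm_add_smul_le_of_mem_Icc (u w : E) {s : ℝ} (hs : s ∈ Set.Icc (0 : ℝ) 1) :
    ‖u + s • w‖ ≤ s * ‖u + w‖ + (1 - s) * ‖u‖ := by
  have hs1 : 0 ≤ 1 - s := sub_nonneg.mpr hs.2
  calc ‖u + s • w‖ = ‖s • (u + w) + (1 - s) • u‖ := by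
        congr 1; rw [smul_add, sub_smul, one_smul]; abel
    _ ≤ ‖s • (u + w)‖ + ‖(1 - s) • u‖ := norm_add_le _ _
    _ = s * ‖u + w‖ + (1 - s) * ‖u‖ := by
        rw [norm_smul, norm_smul, Real.norm_of_nonneg hs.1, Real.norm_of_nonneg hs1]

/-- The symmetric gap `‖u + w‖ + ‖u - w‖ - 2‖u‖` is convex in `w` and vanishes at `0`,
so it grows at least linearly along rays. -/
theorem norm_add_smul_add_norm_sub_smul_sub_le (u w : E) {s : ℝ} (hs : s ∈ Set.Icc (0 : ℝ) 1) :
    ‖u + s • w‖ + ‖u - s • w‖ - 2 * ‖u‖ ≤ s * (‖u + w‖ + ‖u - w‖ - 2 * ‖u‖) := by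
  have hplus := norm_add_smul_le_of_mem_Icc u w hs
  have hminus := norm_add_smul_le_of_mem_Icc u (-w) hs
  rw [smul_neg, ← sub_eq_add_neg, ← sub_eq_add_neg] at hminus
  linarith

theorem norm_add_abs_smul_add_norm_sub_abs_smul (a y : E) (s : ℝ) :
    ‖a + |s| • y‖ + ‖a - |s| • y‖ = ‖a + s • y‖ + ‖a - s • y‖ := by
  rcases abs_cases s with ⟨hs, -⟩ | ⟨hs, -⟩
  · rw [hs]
  · rw [hs, neg_smul, ← sub_eq_add_neg, sub_neg_eq_add, add_comm]

theorem norm_inv_norm_smul_sub_self {v : E} (hv : v ≠ 0) :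
    ‖‖v‖⁻¹ • v - v‖ = |1 - ‖v‖| := by
  have hv' : ‖v‖ ≠ 0 := norm_ne_zero_iff.mpr hv
  calc ‖‖v‖⁻¹ • v - v‖ = |‖v‖⁻¹ - 1| * ‖v‖ := by
        rw [← Real.norm_eq_abs, ← norm_smul, sub_smul, one_smul]
    _ = |(‖v‖⁻¹ - 1) * ‖v‖| := by rw [abs_mul, abs_norm]
    _ = |1 - ‖v‖| := by rw [sub_one_mul, inv_mul_cancel₀ hv']

end NormInequalities

theorem one_div_mul_sum_sub {n : ℕ} (hn : 0 < n) (A : Fin n → ℝ) (C : ℝ) :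
    1 / (n : ℝ) * ∑ i, (A i - C) = 1 / (n : ℝ) * ∑ i, A i - C := by
  have hn' : (n : ℝ) ≠ 0 := Nat.cast_ne_zero.mpr hn.ne'
  rw [Finset.sum_sub_distrib, Finset.sum_const, Finset.card_univ, Fintype.card_fin, nsmul_eq_mul,
    mul_sub]
  field_simp

section Operators

variable {E F : Type*} [NormedAddCommGroup E] [NormedSpace ℝ E]
  [NormedAddCommGroup F] [NormedSpace ℝ F]

theorem StrongDual.exists_norm_le_one_lt_apply (φ : StrongDual ℝ E) {r : ℝ} (hr : r < ‖φ‖) :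
    ∃ z : E, ‖z‖ ≤ 1 ∧ r < φ z := by
  obtain ⟨z, hz, hφz⟩ := φ.exists_lt_apply_of_lt_opNorm hr
  rw [Real.norm_eq_abs] at hφz
  rcases abs_cases (φ z) with ⟨h, -⟩ | ⟨h, -⟩
  · exact ⟨z, hz.le, h ▸ hφz⟩
  · exact ⟨-z, by rw [norm_neg]; exact hz.le, by rw [map_neg]; linarith⟩

theorem StrongDual.exists_norm_le_one_le_apply_of_le_max {g f : StrongDual ℝ E}
    (hg : ‖g‖ ≤ 1) (hf : ‖f‖ ≤ 1) {α : ℝ} (hα : 0 < α) (h : 2 - α ≤ max ‖g + f‖ ‖g - f‖) :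
    ∃ z : E, ‖z‖ ≤ 1 ∧ 1 - 2 * α ≤ g z ∧ 1 - 2 * α ≤ |f z| := by
  have key : ∀ f' : StrongDual ℝ E, ‖f'‖ ≤ 1 → 2 - α ≤ ‖g + f'‖ →
      ∃ z : E, ‖z‖ ≤ 1 ∧ 1 - 2 * α ≤ g z ∧ 1 - 2 * α ≤ |f' z| := by
    intro f' hf' h'
    obtain ⟨z, hz, hlt⟩ :=
      (g + f').exists_norm_le_one_lt_apply (show 2 - 2 * α < ‖g + f'‖ by linarith)
    have hgz : |g z| ≤ 1 := ((g.unit_le_opNorm z hz).trans hg :)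
    have hf'z : |f' z| ≤ 1 := ((f'.unit_le_opNorm z hz).trans hf' :)
    rw [add_apply] at hlt
    exact ⟨z, hz, by linarith [le_abs_self (f' z)],
      by linarith [le_abs_self (f' z), le_abs_self (g z)]⟩
  rcases le_max_iff.mp h with h | h
  · exact key f hf h
  · simpa using key (-f) (by rwa [norm_neg]) (by rwa [← sub_eq_add_neg])

/-- A norming functional of `T` at a point where `‖T x‖ > 1 - α`, renormalised. -/
theorem ContinuousLinearMap.exists_dual_forall_le_norm_apply (T : E →L[ℝ] F) (hT : ‖T‖ = 1)
    {α : ℝ} (hα0 : 0 < α) (hα1 : α ≤ 1) :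
    ∃ g : StrongDual ℝ E, ‖g‖ = 1 ∧ ∀ z : E, 1 - 2 * α ≤ g z → 1 - 3 * α ≤ ‖T z‖ := by
  obtain ⟨x, hx, hTx⟩ := T.exists_lt_apply_of_lt_opNorm (show 1 - α < ‖T‖ by rw [hT]; linarith)
  obtain ⟨φ, hφ, hφx⟩ := exists_dual_vector ℝ (T x) (by linarith)
  set g' : StrongDual ℝ E := φ.comp T
  have hg'le : ‖g'‖ ≤ 1 := (φ.opNorm_comp_le T).trans (by rw [hφ, hT, one_mul])
  have hg'ge : 1 - α < ‖g'‖ :=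
    calc 1 - α < ‖T x‖ := hTx
      _ = g' x := hφx.symm
      _ ≤ ‖g'‖ := (le_abs_self _).trans (g'.unit_le_opNorm x hx.le)
  have hg'T : ∀ z, g' z ≤ ‖T z‖ := fun z ↦
    (le_abs_self _).trans ((φ.le_opNorm (T z)).trans_eq (by rw [hφ, one_mul]))
  have hg'0 : ‖g'‖ ≠ 0 := by linarith
  refine ⟨‖g'‖⁻¹ • g', by rw [norm_smul, norm_inv, norm_norm, inv_mul_cancel₀ hg'0], ?_⟩
  intro z hz
  have hz' : g' z = ‖g'‖ * (‖g'‖⁻¹ • g') z := by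
    rw [smul_apply, smul_eq_mul, mul_inv_cancel_left₀ hg'0]
  nlinarith [hg'T z]

theorem finiteDimensional_range_smulRight (f : StrongDual ℝ E) (y : F) :
    FiniteDimensional ℝ (LinearMap.range (f.smulRight y : E →ₗ[ℝ] F)) := by
  refine Submodule.finiteDimensional_of_le (S₂ := Submodule.span ℝ {y}) ?_
  rintro _ ⟨x, rfl⟩
  exact Submodule.mem_span_singleton.mpr ⟨f x, rfl⟩

theorem norm_add_add_norm_sub_le_opNorm_add_smulRight (T : E →L[ℝ] F) {f : StrongDual ℝ E}
    (hf : ‖f‖ ≤ 1) {z : E} (hz : ‖z‖ ≤ 1) (u y : F) :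
    ‖u + y‖ + ‖u - y‖ ≤ ‖T + f.smulRight y‖ + ‖T - f.smulRight y‖ + 2 * ‖u - T z‖
      + 2 * (1 - |f z|) * ‖y‖ := by
  have hfz : |f z| ≤ 1 := ((f.unit_le_opNorm z hz).trans hf :)
  have hplus : ‖T z + f z • y‖ ≤ ‖T + f.smulRight y‖ := by
    simpa using (T + f.smulRight y).unit_le_opNorm z hz
  have hminus : ‖T z - f z • y‖ ≤ ‖T - f.smulRight y‖ := by
    simpa using (T - f.smulRight y).unit_le_opNorm z hz
  have hy : ‖y - |f z| • y‖ = (1 - |f z|) * ‖y‖ := by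
    rw [show y - |f z| • y = (1 - |f z|) • y by rw [sub_smul, one_smul], norm_smul,
      Real.norm_of_nonneg (sub_nonneg.mpr hfz)]
  have := norm_add_add_norm_sub_le u (T z) y (|f z| • y)
  rw [norm_add_abs_smul_add_norm_sub_abs_smul, hy] at this
  linarith

end Operators

section Roughness

variable {E F : Type*} [NormedAddCommGroup E] [NormedSpace ℝ E]
  [NormedAddCommGroup F] [NormedSpace ℝ F]

theorem IsAverageRough.exists_norm_eq {δ : ℝ} (hF : IsAverageRough F δ) {n : ℕ} (hn : 0 < n)
    (x : Fin n → F) (hx : ∀ i, ‖x i‖ = 1) {ε : ℝ} (hε : 0 < ε) {r : ℝ} (hr : 0 < r) :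
    ∃ y : F, ‖y‖ = r ∧
      (δ - ε) * r ≤ (1 / (n : ℝ)) * ∑ i, (‖x i + y‖ + ‖x i - y‖) - 2 := by
  obtain ⟨y₀, hy₀, hy₀r, hgap⟩ := hF n hn x hx ε hε r hr
  set c : ℝ := r / ‖y₀‖
  have hc : 1 ≤ c := (one_le_div hy₀).mpr hy₀r.le
  have hc0 : 0 < c := one_pos.trans_le hc
  refine ⟨c • y₀, by rw [norm_smul, Real.norm_of_nonneg hc0.le, div_mul_cancel₀ _ hy₀.ne'], ?_⟩
  have hray : ∀ i, c * (‖x i + y₀‖ + ‖x i - y₀‖ - 2) ≤ ‖x i + c • y₀‖ + ‖x i - c • y₀‖ - 2 := by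
    intro i
    have h := norm_add_smul_add_norm_sub_smul_sub_le (x i) (c • y₀)
      ⟨inv_nonneg.mpr hc0.le, inv_le_one_of_one_le₀ hc⟩
    rw [smul_smul, inv_mul_cancel₀ hc0.ne', one_smul, hx i, mul_one] at h
    exact (le_inv_mul_iff₀ hc0).mp h
  calc (δ - ε) * r = c * ((δ - ε) * ‖y₀‖) := by
        rw [mul_left_comm, div_mul_cancel₀ _ hy₀.ne']
    _ ≤ c * ((1 / (n : ℝ)) * ∑ i, (‖x i + y₀‖ + ‖x i - y₀‖) - 2) := by gcongr
    _ = (1 / (n : ℝ)) * ∑ i, c * (‖x i + y₀‖ + ‖x i - y₀‖ - 2) := by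
        rw [← one_div_mul_sum_sub hn, mul_left_comm, Finset.mul_sum]
    _ ≤ (1 / (n : ℝ)) * ∑ i, (‖x i + c • y₀‖ + ‖x i - c • y₀‖ - 2) := by
        gcongr with i
        exact hray i
    _ = _ := one_div_mul_sum_sub hn _ _

theorem AlternativelyOctahedral.exists_forall_norm_add_add_norm_sub_le
    (hE : AlternativelyOctahedral (StrongDual ℝ E)) {n : ℕ} (T : Fin n → E →L[ℝ] F)
    (hT : ∀ i, ‖T i‖ = 1) {α : ℝ} (hα0 : 0 < α) (hα : α < 1 / 3) :
    ∃ f : StrongDual ℝ E, ‖f‖ = 1 ∧ ∃ u : Fin n → F, (∀ i, ‖u i‖ = 1) ∧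
      ∀ i y, ‖u i + y‖ + ‖u i - y‖
        ≤ ‖T i + f.smulRight y‖ + ‖T i - f.smulRight y‖ + 6 * α + 4 * α * ‖y‖ := by
  choose g hg hgT using fun i ↦ (T i).exists_dual_forall_le_norm_apply (hT i) hα0 (by linarith)
  obtain ⟨f, hf, hgf⟩ := hE n g hg α hα0
  choose z hz hgz hfz using fun i ↦
    StrongDual.exists_norm_le_one_le_apply_of_le_max (hg i).le hf.le hα0 (hgf i)
  have hTz : ∀ i, 1 - 3 * α ≤ ‖T i (z i)‖ := fun i ↦ hgT i _ (hgz i)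
  have hTz1 : ∀ i, ‖T i (z i)‖ ≤ 1 := fun i ↦ ((T i).unit_le_opNorm _ (hz i)).trans_eq (hT i)
  have hTz0 : ∀ i, ‖T i (z i)‖ ≠ 0 := fun i ↦ by linarith [hTz i]
  refine ⟨f, hf, fun i ↦ ‖T i (z i)‖⁻¹ • T i (z i), fun i ↦ ?_, fun i y ↦ ?_⟩
  · rw [norm_smul, norm_inv, norm_norm, inv_mul_cancel₀ (hTz0 i)]
  · have hu : ‖‖T i (z i)‖⁻¹ • T i (z i) - T i (z i)‖ ≤ 3 * α := by
      rw [norm_inv_norm_smul_sub_self (norm_ne_zero_iff.mp (hTz0 i)),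
        abs_of_nonneg (sub_nonneg.mpr (hTz1 i))]
      linarith [hTz i]
    have hy : 2 * (1 - |f (z i)|) * ‖y‖ ≤ 4 * α * ‖y‖ :=
      mul_le_mul_of_nonneg_right (by linarith [hfz i]) (norm_nonneg y)
    linarith [norm_add_add_norm_sub_le_opNorm_add_smulRight (T i) hf.le (hz i)
      (‖T i (z i)‖⁻¹ • T i (z i)) y]

end Roughness

theorem stmt1_general
    (X Y : Type*) [NormedAddCommGroup X] [NormedSpace ℝ X]
    [NormedAddCommGroup Y] [NormedSpace ℝ Y]
    (H : Submodule ℝ (X →L[ℝ] Y))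
    (hHfin : ∀ T : X →L[ℝ] Y, FiniteDimensional ℝ (LinearMap.range (T : X →ₗ[ℝ] Y)) → T ∈ H)
    (δ : ℝ)
    (hX : AlternativelyOctahedral (StrongDual ℝ X)) (hY : IsAverageRough Y δ) :
    IsAverageRough H δ := by
  intro n hn T hT ε hε η hη
  set r := η / 2
  have hr : 0 < r := half_pos hη
  set α := min (ε * r / (12 + 8 * r)) (1 / 4)
  have hα0 : 0 < α := lt_min (by positivity) (by norm_num)
  have hαε : 6 * α + 4 * α * r ≤ ε / 2 * r := by
    have := (le_div_iff₀ (by positivity)).mp (min_le_left (ε * r / (12 + 8 * r)) (1 / 4))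
    linarith
  obtain ⟨f, hf, u, hu, hTu⟩ :=
    hX.exists_forall_norm_add_add_norm_sub_le (fun i ↦ (T i : X →L[ℝ] Y)) hT hα0
      (by linarith [min_le_right (ε * r / (12 + 8 * r)) (1 / 4)])
  obtain ⟨y, hy, hgap⟩ := hY.exists_norm_eq hn u hu (half_pos hε) hr
  set S : H := ⟨f.smulRight y, hHfin _ (finiteDimensional_range_smulRight f y)⟩
  have hS : ‖S‖ = r := by
    rw [Submodule.coe_norm, ContinuousLinearMap.norm_smulRight_apply, hf, hy, one_mul]
  refine ⟨S, hS ▸ hr, hS ▸ half_lt_self hη, ?_⟩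
  calc (δ - ε) * ‖S‖ ≤ (δ - ε / 2) * r - (6 * α + 4 * α * r) := by rw [hS]; linarith
    _ ≤ (1 / (n : ℝ)) * ∑ i, (‖u i + y‖ + ‖u i - y‖ - (6 * α + 4 * α * r)) - 2 := by
        rw [one_div_mul_sum_sub hn]
        linarith
    _ ≤ (1 / (n : ℝ)) * ∑ i, (‖T i + S‖ + ‖T i - S‖) - 2 := by
        gcongr with i
        linarith [hy ▸ hTu i y, show ‖T i + S‖ = ‖(T i : X →L[ℝ] Y) + f.smulRight y‖ from rfl,
          show ‖T i - S‖ = ‖(T i : X →L[ℝ] Y) - f.smulRight y‖ from rfl]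

theorem stmt1
    (X Y : Type*) [NormedAddCommGroup X] [NormedSpace ℝ X] [CompleteSpace X] [Nontrivial X]
    [NormedAddCommGroup Y] [NormedSpace ℝ Y] [CompleteSpace Y] [Nontrivial Y]
    (H : Submodule ℝ (X →L[ℝ] Y)) (hHclosed : IsClosed (H : Set (X →L[ℝ] Y)))
    (hHfin : ∀ T : X →L[ℝ] Y, FiniteDimensional ℝ (LinearMap.range (T : X →ₗ[ℝ] Y)) → T ∈ H)
    (δ : ℝ) (hδ : 0 < δ)
    (hX : AlternativelyOctahedral (StrongDual ℝ X)) (hY : IsAverageRough Y δ) :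
    IsAverageRough H δ :=
  stmt1_general X Y H hHfin δ hX hY
end

section
/- Let X and Y be nontrivial real Banach spaces, let H be a closed linear subspace of L(X,Y) containing all finite rank operators, and let δ > 0. If Y is δ-rough, then H (with the induced operator norm) is δ-rough. -/
open scoped BigOperators

/-!
Given `T ∈ H` of norm one, pick a unit vector `x` at which `T` almost attains its norm, and apply
the roughness of `Y` at the direction of `T x`. Roughness only produces small witnesses, but since
`‖z + c • y‖ + ‖z - c • y‖ - 2` grows at least linearly in `c ≥ 1`, a witness can be scaled up to
any prescribed length `r` while keeping the rate `δ - ε`; this lets the error `1 - ‖T x‖` be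
chosen small compared with `r`. The rank-one operator `S = f ⊗ u`, with `f` norming `x` and `u`
the scaled witness, lies in `H`, has norm `r`, and `‖T ± S‖ ≥ ‖T x ± u‖`.
-/

section RankOne

variable {𝕜 E F : Type*} [RCLike 𝕜] [NormedAddCommGroup E] [NormedSpace 𝕜 E]
  [NormedAddCommGroup F] [NormedSpace 𝕜 F]

theorem ContinuousLinearMap.exists_norm_eq_one_lt_norm_apply (T : E →L[𝕜] F) {c : ℝ}
    (hc₀ : 0 ≤ c) (hc : c < ‖T‖) : ∃ x : E, ‖x‖ = 1 ∧ c < ‖T x‖ := by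
  obtain ⟨x, hx, hTx⟩ := T.exists_lt_apply_of_lt_opNorm hc
  have hx₀ : x ≠ 0 := by
    rintro rfl
    simp only [map_zero, norm_zero] at hTx
    linarith
  refine ⟨(‖x‖⁻¹ : 𝕜) • x, norm_smul_inv_norm hx₀, ?_⟩
  have hinv : 1 ≤ ‖x‖⁻¹ := one_le_inv₀ (norm_pos_iff.2 hx₀) |>.2 hx.le
  calc c < ‖T x‖ := hTx
    _ ≤ ‖x‖⁻¹ * ‖T x‖ := le_mul_of_one_le_left (norm_nonneg _) hinv
    _ = ‖T ((‖x‖⁻¹ : 𝕜) • x)‖ := by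
      rw [map_smul, norm_smul, norm_inv, RCLike.norm_ofReal, abs_norm]

theorem exists_finiteDimensional_range_apply_eq {x : E} (hx : ‖x‖ = 1) (v : F) :
    ∃ S : E →L[𝕜] F, S x = v ∧ ‖S‖ = ‖v‖ ∧
      FiniteDimensional 𝕜 (LinearMap.range (S : E →ₗ[𝕜] F)) := by
  obtain ⟨f, hf, hfx⟩ := exists_dual_vector 𝕜 x (by simp [hx])
  have hf₀ : f ≠ 0 := by
    rintro rfl
    simp at hf
  refine ⟨f.smulRight v, ?_, ?_, ?_⟩
  · simp [hfx, hx]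
  · rw [ContinuousLinearMap.norm_smulRight_apply, hf, one_mul]
  · rw [ContinuousLinearMap.range_smulRight_apply hf₀]
    infer_instance

end RankOne

section Roughness

variable {Z : Type*} [NormedAddCommGroup Z] [NormedSpace ℝ Z]

theorem mul_norm_add_le_norm_add_smul (z v : Z) {c : ℝ} (hc : 1 ≤ c) :
    c * ‖z + v‖ ≤ ‖z + c • v‖ + (c - 1) * ‖z‖ :=
  calc c * ‖z + v‖ = ‖c • (z + v)‖ := by rw [norm_smul, Real.norm_of_nonneg (by linarith)]
    _ = ‖(z + c • v) + (c - 1) • z‖ := by congr 1; module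
    _ ≤ ‖z + c • v‖ + ‖(c - 1) • z‖ := norm_add_le _ _
    _ = ‖z + c • v‖ + (c - 1) * ‖z‖ := by rw [norm_smul, Real.norm_of_nonneg (by linarith)]

theorem mul_norm_add_add_norm_sub_sub_two_le {z : Z} (hz : ‖z‖ = 1) (y : Z) {c : ℝ} (hc : 1 ≤ c) :
    c * (‖z + y‖ + ‖z - y‖ - 2) ≤ ‖z + c • y‖ + ‖z - c • y‖ - 2 := by
  have h_add := mul_norm_add_le_norm_add_smul z y hc
  have h_sub := mul_norm_add_le_norm_add_smul z (-y) hc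
  rw [← sub_eq_add_neg, smul_neg, ← sub_eq_add_neg, hz] at h_sub
  rw [hz] at h_add
  linarith

theorem IsRough.exists_norm_eq {δ : ℝ} (hZ : IsRough Z δ) {z : Z} (hz : ‖z‖ = 1)
    {ε r : ℝ} (hε : 0 < ε) (hr : 0 < r) :
    ∃ u : Z, ‖u‖ = r ∧ (δ - ε) * r ≤ ‖z + u‖ + ‖z - u‖ - 2 := by
  obtain ⟨y, hy₀, hyr, hy⟩ := hZ z hz ε hε r hr
  have hc : 1 ≤ r / ‖y‖ := (one_le_div hy₀).2 hyr.le
  refine ⟨(r / ‖y‖) • y, ?_, ?_⟩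
  · rw [norm_smul, Real.norm_of_nonneg (by positivity), div_mul_cancel₀ _ hy₀.ne']
  · calc (δ - ε) * r = r / ‖y‖ * ((δ - ε) * ‖y‖) := by field_simp
      _ ≤ r / ‖y‖ * (‖z + y‖ + ‖z - y‖ - 2) := by gcongr
      _ ≤ _ := mul_norm_add_add_norm_sub_sub_two_le hz y hc

theorem IsRough.exists_norm_eq_of_ne_zero {δ : ℝ} (hZ : IsRough Z δ) {w : Z} (hw : w ≠ 0)
    {ε r : ℝ} (hε : 0 < ε) (hr : 0 < r) :
    ∃ u : Z, ‖u‖ = r ∧ (δ - ε) * r - 2 * |1 - ‖w‖| ≤ ‖w + u‖ + ‖w - u‖ - 2 := by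
  have hw₀ : 0 < ‖w‖ := norm_pos_iff.2 hw
  set z : Z := ‖w‖⁻¹ • w
  have hz : ‖z‖ = 1 := by
    rw [norm_smul, norm_inv, norm_norm, inv_mul_cancel₀ hw₀.ne']
  obtain ⟨u, hu, hzu⟩ := hZ.exists_norm_eq hz hε hr
  have hzw : ‖z - w‖ = |1 - ‖w‖| :=
    calc ‖z - w‖ = ‖(‖w‖⁻¹ - 1) • w‖ := by rw [sub_smul, one_smul]
      _ = |‖w‖⁻¹ - 1| * |‖w‖| := by rw [norm_smul, Real.norm_eq_abs, abs_norm]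
      _ = |1 - ‖w‖| := by rw [← abs_mul, sub_mul, inv_mul_cancel₀ hw₀.ne', one_mul]
  have h_add := norm_sub_norm_le (z + u) (w + u)
  have h_sub := norm_sub_norm_le (z - u) (w - u)
  rw [add_sub_add_right_eq_sub, hzw] at h_add
  rw [sub_sub_sub_cancel_right, hzw] at h_sub
  exact ⟨u, hu, by linarith⟩

end Roughness

theorem stmt3_general
    (X Y : Type*) [NormedAddCommGroup X] [NormedSpace ℝ X]
    [NormedAddCommGroup Y] [NormedSpace ℝ Y]
    (H : Submodule ℝ (X →L[ℝ] Y))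
    (hHfin : ∀ T : X →L[ℝ] Y, FiniteDimensional ℝ (LinearMap.range (T : X →ₗ[ℝ] Y)) → T ∈ H)
    (δ : ℝ)
    (hY : IsRough Y δ) :
    IsRough H δ := by
  rintro ⟨T, -⟩ (hT : ‖T‖ = 1) ε hε η hη
  set r := η / 2 with hr_def
  have hr : 0 < r := half_pos hη
  obtain ⟨x, hx, hTx⟩ := T.exists_norm_eq_one_lt_norm_apply (le_max_right (1 - ε * r / 4) 0)
    (by rw [hT]; exact max_lt (by linarith [mul_pos hε hr]) one_pos)
  have hTx₁ : ‖T x‖ ≤ 1 := by simpa [hT, hx] using T.le_opNorm x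
  have hTx₀ : T x ≠ 0 := norm_pos_iff.1 ((le_max_right _ _).trans_lt hTx)
  obtain ⟨u, hu, hTxu⟩ := hY.exists_norm_eq_of_ne_zero hTx₀ (half_pos hε) hr
  obtain ⟨S, hSx, hS, hSfin⟩ := exists_finiteDimensional_range_apply_eq (𝕜 := ℝ) hx u
  refine ⟨⟨S, hHfin S hSfin⟩, ?_, ?_, ?_⟩
  · show 0 < ‖S‖
    rwa [hS, hu]
  · show ‖S‖ < η
    rw [hS, hu]
    linarith
  · show (δ - ε) * ‖S‖ ≤ ‖T + S‖ + ‖T - S‖ - 2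
    have h_add : ‖T x + u‖ ≤ ‖T + S‖ := by simpa [hx, hSx] using (T + S).le_opNorm x
    have h_sub : ‖T x - u‖ ≤ ‖T - S‖ := by simpa [hx, hSx] using (T - S).le_opNorm x
    rw [abs_of_nonneg (sub_nonneg.2 hTx₁)] at hTxu
    rw [hS, hu]
    linarith [le_max_left (1 - ε * r / 4) 0]

theorem stmt3
    (X Y : Type*) [NormedAddCommGroup X] [NormedSpace ℝ X] [CompleteSpace X] [Nontrivial X]
    [NormedAddCommGroup Y] [NormedSpace ℝ Y] [CompleteSpace Y] [Nontrivial Y]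
    (H : Submodule ℝ (X →L[ℝ] Y)) (hHclosed : IsClosed (H : Set (X →L[ℝ] Y)))
    (hHfin : ∀ T : X →L[ℝ] Y, FiniteDimensional ℝ (LinearMap.range (T : X →ₗ[ℝ] Y)) → T ∈ H)
    (δ : ℝ) (hδ : 0 < δ)
    (hY : IsRough Y δ) :
    IsRough H δ :=
  stmt3_general X Y H hHfin δ hY
end

section
/- Let X and Y be nontrivial real Banach spaces, let H be a closed linear subspace of L(X,Y) containing all finite rank operators, and let δ > 0. If H (with the induced operator norm) is δ-rough and Y is non-rough, then the dual space X* is δ-rough. -/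
open scoped BigOperators

/-!
Fix `f ∈ S_{X*}` and `ε > 0`. As `Y` is not `ε/8`-rough, there is `y₀ ∈ S_Y` with
`‖y₀ + z‖ + ‖y₀ - z‖ ≤ 2 + (ε/8)‖z‖` for all small `z`; let `y*` be a norming functional of `y₀`.
The rank-one operator `T = f ⊗ y₀` lies in `H`, so the roughness of `H` at `T` yields a small `S`
with `‖T + S‖ + ‖T - S‖ - 2 ≥ (δ - ε/2)‖S‖`. Writing `(T ± S) x = ((f ± y* ∘ S) x) y₀ + z` with
`y* z = 0`, the flatness of the norm at `y₀` gives `‖T ± S‖ ≤ ‖f ± y* ∘ S‖ + (ε/4)‖S‖`, so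
`g = y* ∘ S` witnesses the roughness of `X*` at `f`.
-/

theorem two_mul_norm_le_norm_add_add_norm_sub {E : Type*} [NormedAddCommGroup E]
    [NormedSpace ℝ E] (x y : E) : 2 * ‖x‖ ≤ ‖x + y‖ + ‖x - y‖ := by
  calc 2 * ‖x‖ = ‖(x + y) + (x - y)‖ := by
        rw [show (x + y) + (x - y) = (2 : ℝ) • x by module, norm_smul, Real.norm_two]
    _ ≤ ‖x + y‖ + ‖x - y‖ := norm_add_le _ _

theorem IsRough.of_forall_lt {Z : Type*} [NormedAddCommGroup Z] [NormedSpace ℝ Z] {δ : ℝ}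
    (h : ∀ x : Z, ‖x‖ = 1 → ∀ ε > (0 : ℝ), ε < δ → ∀ η > (0 : ℝ), ∃ y : Z, 0 < ‖y‖ ∧ ‖y‖ < η ∧
      (δ - ε) * ‖y‖ ≤ ‖x + y‖ + ‖x - y‖ - 2) :
    IsRough Z δ := by
  intro x hx ε hε η hη
  rcases lt_or_ge ε δ with hεδ | hδε
  · exact h x hx ε hε hεδ η hη
  have hy : ‖(η / 2) • x‖ = η / 2 := by
    rw [norm_smul, hx, mul_one, Real.norm_of_nonneg (by positivity)]
  refine ⟨(η / 2) • x, by rw [hy]; positivity, by rw [hy]; linarith, ?_⟩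
  have := two_mul_norm_le_norm_add_add_norm_sub x ((η / 2) • x)
  nlinarith [norm_nonneg ((η / 2) • x)]

theorem pos_norm_and_roughness_of_norm_le {Z : Type*} [NormedAddCommGroup Z] {x g : Z}
    (hx : ‖x‖ = 1) {δ ε s : ℝ} (hεδ : ε < δ) (hs : 0 < s) (hgs : ‖g‖ ≤ s)
    (h : (δ - ε) * s ≤ ‖x + g‖ + ‖x - g‖ - 2) :
    0 < ‖g‖ ∧ (δ - ε) * ‖g‖ ≤ ‖x + g‖ + ‖x - g‖ - 2 := by
  refine ⟨(norm_nonneg g).lt_of_ne fun hg => ?_,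
    (mul_le_mul_of_nonneg_left hgs (by linarith)).trans h⟩
  rw [eq_comm, norm_eq_zero] at hg
  rw [hg, add_zero, sub_zero, hx] at h
  nlinarith

def IsFlatAt {Y : Type*} [NormedAddCommGroup Y] (y₀ : Y) (ρ η₀ : ℝ) : Prop :=
  ∀ z : Y, ‖z‖ < η₀ → ‖y₀ + z‖ + ‖y₀ - z‖ ≤ 2 + ρ * ‖z‖

theorem NonRough.exists_isFlatAt {Y : Type*} [NormedAddCommGroup Y] (hY : NonRough Y)
    {ρ : ℝ} (hρ : 0 < ρ) : ∃ y₀ : Y, ‖y₀‖ = 1 ∧ ∃ η₀ > (0 : ℝ), IsFlatAt y₀ ρ η₀ := by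
  have hnot : ¬ IsRough Y ρ := fun h => hY ⟨ρ, hρ, h⟩
  simp only [IsRough, not_forall, not_exists, not_and, not_le] at hnot
  obtain ⟨y₀, hy₀, ε, hε, η₀, hη₀, hflat⟩ := hnot
  refine ⟨y₀, hy₀, η₀, hη₀, fun z hz => ?_⟩
  rcases (norm_nonneg z).eq_or_lt with h0 | h0
  · rw [eq_comm, norm_eq_zero] at h0
    norm_num [h0, hy₀]
  · nlinarith [hflat z h0 hz]

section Flat

variable {X Y : Type*} [NormedAddCommGroup X] [NormedSpace ℝ X] [NormedAddCommGroup Y]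
  [NormedSpace ℝ Y] {y₀ : Y} {ystar : StrongDual ℝ Y} {ρ η₀ : ℝ}

theorem IsFlatAt.norm_add_le_of_apply_eq_zero (hflat : IsFlatAt y₀ ρ η₀) (hys : ‖ystar‖ ≤ 1)
    (hysy : ystar y₀ = 1) {z : Y} (hz : ystar z = 0) (hzη : ‖z‖ < η₀) :
    ‖y₀ + z‖ ≤ 1 + ρ * ‖z‖ := by
  have : 1 ≤ ‖y₀ - z‖ :=
    calc (1 : ℝ) = ystar (y₀ - z) := by rw [map_sub, hysy, hz, sub_zero]
      _ ≤ ‖ystar‖ * ‖y₀ - z‖ := (le_abs_self _).trans (ystar.le_opNorm _)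
      _ ≤ ‖y₀ - z‖ := mul_le_of_le_one_left (norm_nonneg _) hys
  linarith [hflat z hzη]

theorem IsFlatAt.norm_smul_add_le_of_apply_eq_zero (hflat : IsFlatAt y₀ ρ η₀)
    (hys : ‖ystar‖ ≤ 1) (hysy : ystar y₀ = 1) {a : ℝ} (ha : a ≠ 0) {z : Y} (hz : ystar z = 0)
    (hzη : ‖z‖ < |a| * η₀) :
    ‖a • y₀ + z‖ ≤ |a| + ρ * ‖z‖ := by
  have ha' : 0 < |a| := abs_pos.mpr ha
  have hw : ‖a⁻¹ • z‖ = ‖z‖ / |a| := by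
    rw [norm_smul, Real.norm_eq_abs, abs_inv, inv_mul_eq_div]
  have hflat_w := hflat.norm_add_le_of_apply_eq_zero hys hysy (z := a⁻¹ • z)
    (by rw [map_smul, hz, smul_zero]) (by rw [hw, div_lt_iff₀ ha']; linarith)
  calc ‖a • y₀ + z‖ = |a| * ‖y₀ + a⁻¹ • z‖ := by
        rw [← Real.norm_eq_abs, ← norm_smul, smul_add, smul_inv_smul₀ ha]
    _ ≤ |a| * (1 + ρ * (‖z‖ / |a|)) := by rw [← hw]; gcongr
    _ = |a| + ρ * ‖z‖ := by field_simp

theorem IsFlatAt.norm_smulRight_add_le (hflat : IsFlatAt y₀ ρ η₀) (hρ : 0 ≤ ρ)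
    (hy₀ : ‖y₀‖ = 1) (hys : ‖ystar‖ ≤ 1) (hysy : ystar y₀ = 1) {f : StrongDual ℝ X}
    (hf : ‖f‖ = 1) {S : X →L[ℝ] Y} (hSη : ‖S‖ < η₀ / 4) (hS : ‖S‖ ≤ 1 / 6) :
    ‖f.smulRight y₀ + S‖ ≤ ‖f + ystar.comp S‖ + 2 * ρ * ‖S‖ := by
  set g := ystar.comp S
  have hgS : ‖g‖ ≤ ‖S‖ :=
    (ystar.opNorm_comp_le S).trans (mul_le_of_le_one_left (norm_nonneg _) hys)
  refine ContinuousLinearMap.opNorm_le_of_unit_norm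
    (add_nonneg (norm_nonneg _) (mul_nonneg (by positivity) (norm_nonneg _))) fun x hx => ?_
  set a := (f + g) x
  set z := S x - g x • y₀
  have hdecomp : (f.smulRight y₀ + S) x = a • y₀ + z := by
    simp only [a, z, add_apply, ContinuousLinearMap.smulRight_apply]
    module
  have hz : ystar z = 0 := by simp [z, g, hysy]
  have hzS : ‖z‖ ≤ 2 * ‖S‖ :=
    calc ‖z‖ ≤ ‖S x‖ + ‖g x • y₀‖ := norm_sub_le _ _
      _ = ‖S x‖ + ‖g x‖ := by rw [norm_smul, hy₀, mul_one]
      _ ≤ ‖S‖ + ‖g‖ := add_le_add (S.unit_le_opNorm x hx.le) (g.unit_le_opNorm x hx.le)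
      _ ≤ 2 * ‖S‖ := by linarith
  have ha : |a| ≤ ‖f + g‖ := (f + g).unit_le_opNorm x hx.le
  rw [hdecomp]
  -- flatness at `y₀` controls `a • y₀ + z` only when `‖z‖` is small relative to `|a|`;
  -- small `|a|` are harmless because `‖f + g‖ ≥ 1 - ‖S‖`
  rcases le_or_gt (1 / 2) |a| with hbig | hsmall
  · have ha0 : a ≠ 0 := abs_pos.mp (by linarith)
    calc ‖a • y₀ + z‖ ≤ |a| + ρ * ‖z‖ :=
          hflat.norm_smul_add_le_of_apply_eq_zero hys hysy ha0 hz (by nlinarith [norm_nonneg S])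
      _ ≤ ‖f + g‖ + 2 * ρ * ‖S‖ := by nlinarith
  · have hfg : 1 - ‖S‖ ≤ ‖f + g‖ := by
      have := norm_sub_le (f + g) g
      rw [add_sub_cancel_right, hf] at this
      linarith
    calc ‖a • y₀ + z‖ ≤ |a| + ‖z‖ :=
          (norm_add_le _ _).trans_eq (by rw [norm_smul, hy₀, mul_one, Real.norm_eq_abs])
      _ ≤ ‖f + g‖ + 2 * ρ * ‖S‖ := by nlinarith [norm_nonneg S]

theorem IsFlatAt.norm_smulRight_add_add_norm_smulRight_sub_le (hflat : IsFlatAt y₀ ρ η₀)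
    (hρ : 0 ≤ ρ) (hy₀ : ‖y₀‖ = 1) (hys : ‖ystar‖ ≤ 1) (hysy : ystar y₀ = 1)
    {f : StrongDual ℝ X} (hf : ‖f‖ = 1) {S : X →L[ℝ] Y} (hSη : ‖S‖ < η₀ / 4)
    (hS : ‖S‖ ≤ 1 / 6) :
    ‖f.smulRight y₀ + S‖ + ‖f.smulRight y₀ - S‖ ≤
      ‖f + ystar.comp S‖ + ‖f - ystar.comp S‖ + 4 * ρ * ‖S‖ := by
  have hplus := hflat.norm_smulRight_add_le hρ hy₀ hys hysy hf hSη hS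
  have hminus := hflat.norm_smulRight_add_le hρ hy₀ hys hysy hf (S := -S)
    (by rwa [norm_neg]) (by rwa [norm_neg])
  rw [← sub_eq_add_neg, ContinuousLinearMap.comp_neg, ← sub_eq_add_neg, norm_neg] at hminus
  linarith

end Flat

theorem stmt11_general
    (X Y : Type*) [NormedAddCommGroup X] [NormedSpace ℝ X]
    [NormedAddCommGroup Y] [NormedSpace ℝ Y]
    (H : Submodule ℝ (X →L[ℝ] Y))
    (hHfin : ∀ T : X →L[ℝ] Y, FiniteDimensional ℝ (LinearMap.range (T : X →ₗ[ℝ] Y)) → T ∈ H)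
    (δ : ℝ)
    (hH : IsRough H δ) (hY : NonRough Y) :
    IsRough (StrongDual ℝ X) δ := by
  refine IsRough.of_forall_lt fun f hf ε hε hεδ η hη => ?_
  obtain ⟨y₀, hy₀, η₀, hη₀, hflat⟩ := hY.exists_isFlatAt (ρ := ε / 8) (by positivity)
  obtain ⟨ystar, hys, hysy⟩ := exists_dual_vector'' ℝ y₀
  rw [hy₀, RCLike.ofReal_one] at hysy
  have hT : f.smulRight y₀ ∈ H := hHfin _ <| by
    rw [ContinuousLinearMap.range_smulRight_apply (norm_ne_zero_iff.mp (by rw [hf]; norm_num))]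
    infer_instance
  obtain ⟨⟨S, _⟩, hS0, hSη, hrough⟩ := hH ⟨_, hT⟩
    (by simp [ContinuousLinearMap.norm_smulRight_apply, hf, hy₀]) (ε / 2) (by positivity)
    (min η (min (η₀ / 4) (1 / 6))) (by positivity)
  change 0 < ‖S‖ at hS0
  change ‖S‖ < min η (min (η₀ / 4) (1 / 6)) at hSη
  change _ * ‖S‖ ≤ ‖f.smulRight y₀ + S‖ + ‖f.smulRight y₀ - S‖ - 2 at hrough
  obtain ⟨hSη, hSη₀, hS⟩ : ‖S‖ < η ∧ ‖S‖ < η₀ / 4 ∧ ‖S‖ < 1 / 6 := by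
    simpa only [lt_min_iff] using hSη
  have hflat_sum := hflat.norm_smulRight_add_add_norm_smulRight_sub_le (by positivity) hy₀ hys
    hysy hf hSη₀ hS.le
  have hgS : ‖ystar.comp S‖ ≤ ‖S‖ :=
    (ystar.opNorm_comp_le S).trans (mul_le_of_le_one_left (norm_nonneg _) hys)
  obtain ⟨hg0, hg⟩ := pos_norm_and_roughness_of_norm_le hf hεδ hS0 hgS (by linarith)
  exact ⟨_, hg0, hgS.trans_lt hSη, hg⟩

theorem stmt11
    (X Y : Type*) [NormedAddCommGroup X] [NormedSpace ℝ X] [CompleteSpace X] [Nontrivial X]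
    [NormedAddCommGroup Y] [NormedSpace ℝ Y] [CompleteSpace Y] [Nontrivial Y]
    (H : Submodule ℝ (X →L[ℝ] Y)) (hHclosed : IsClosed (H : Set (X →L[ℝ] Y)))
    (hHfin : ∀ T : X →L[ℝ] Y, FiniteDimensional ℝ (LinearMap.range (T : X →ₗ[ℝ] Y)) → T ∈ H)
    (δ : ℝ) (hδ : 0 < δ)
    (hH : IsRough H δ) (hY : NonRough Y) :
    IsRough (StrongDual ℝ X) δ :=
  stmt11_general X Y H hHfin δ hH hY
end
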